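/- arXiv:1711.00359 — 8 statements merged into one kernel-verified Lean document; each statement's English description precedes it below -/
import Mathlib

section
/- Let n and k be positive integers with 1 ≤ k < n, and let x = (U_x, V_x) and y = (U_y, V_y) be two distinct feasible solutions of the balanced complete bipartite subgraph problem (i.e. U_x, V_x, U_y, V_y ⊆ Fin n with |U_x| = |V_x| = |U_y| = |V_y| = k). Then x and y are adjacent (there exists c : Fin n → Fin n → ℝ with w_c(x) = w_c(y) and w_c(z) < w_c(x) for every feasible z ∉ {x, y}) if and only if either the subgraphs have no common parts, i.e. U_x ≠ U_y and V_x ≠ V_y, or they coincide in one part and differ in exactly one vertex in the other, i.e. (U_x = U_y and |V_x \ V_y| = 1) or (V_x = V_y and |U_x \ U_y| = 1). -/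
/-!
Take the weight `c = 1_x + 1_y` on edges. Then `w_c(z) = |z ∩ x| + |z ∩ y|` (as edge sets), and
among bicliques of `k²` edges this is maximal exactly at the `z` with `x ∩ y ⊆ z ⊆ x ∪ y`. If the
parts of `x` and `y` both differ, a `k × k` rectangle inside the union of the two rectangles must
be one of them; if they share a part and differ in one vertex of the other, the interval holds
only `x` and `y` by counting. Conversely, if they share a part and differ in at least two vertices
of the other, exchanging a vertex `a ∈ V_x \ V_y` with `b ∈ V_y \ V_x` gives two further solutions
whose weights add up to `w_c(x) + w_c(y)` for every `c`, so `x` and `y` cannot be the only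
maximisers.
-/

open Finset

noncomputable def weight {n : ℕ} (c : Fin n → Fin n → ℝ) (U V : Finset (Fin n)) : ℝ :=
  ∑ i ∈ U, ∑ j ∈ V, c i j

section FinsetLemmas

variable {α β : Type*} [DecidableEq α] [DecidableEq β]

lemma card_inter_lt_of_not_subset {Z W : Finset α} (h : ¬ Z ⊆ W) : #(Z ∩ W) < #Z :=
  card_lt_card (inter_subset_left.ssubset_of_ne (mt inter_eq_left.mp h))

lemma card_inter_add_card_inter_lt {X Y Z : Finset α} (hZ : #Z ≤ #X)
    (h : ¬ (X ∩ Y ⊆ Z ∧ Z ⊆ X ∪ Y)) : #(Z ∩ X) + #(Z ∩ Y) < #X + #(X ∩ Y) := by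
  have hsplit : #(Z ∩ X) + #(Z ∩ Y) = #(Z ∩ (X ∪ Y)) + #(Z ∩ (X ∩ Y)) := by
    rw [← card_union_add_card_inter, ← inter_union_distrib_left, ← inter_inter_distrib_left]
  have hunion : #(Z ∩ (X ∪ Y)) ≤ #Z := card_le_card inter_subset_left
  have hinter : #(Z ∩ (X ∩ Y)) ≤ #(X ∩ Y) := card_le_card inter_subset_right
  rw [hsplit]
  rcases not_and_or.mp h with hXY | hZXY
  · have : #(Z ∩ (X ∩ Y)) < #(X ∩ Y) := by
      rw [inter_comm]; exact card_inter_lt_of_not_subset hXY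
    omega
  · have := card_inter_lt_of_not_subset hZXY
    omega

lemma eq_or_eq_of_inter_subset_of_subset_union {A B C : Finset α} (hA : #C = #A) (hB : #C = #B)
    (hAB : #(A \ B) = 1) (hlow : A ∩ B ⊆ C) (hup : C ⊆ A ∪ B) : C = A ∨ C = B := by
  obtain ⟨a, ha⟩ := card_eq_one.mp hAB
  have honly : ∀ x ∈ A, x ∉ B → x = a := fun x hx hxB => by
    rw [← mem_singleton, ← ha]; exact mem_sdiff.mpr ⟨hx, hxB⟩
  by_cases haC : a ∈ C
  · left
    refine (eq_of_subset_of_card_le (t := C) (fun x hx => ?_) hA.le).symm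
    by_cases hxB : x ∈ B
    · exact hlow (mem_inter.mpr ⟨hx, hxB⟩)
    · rwa [honly x hx hxB]
  · right
    refine eq_of_subset_of_card_le (fun x hx => ?_) hB.ge
    by_contra hxB
    have hxA : x ∈ A := (mem_union.mp (hup hx)).resolve_right hxB
    exact haC (honly x hxA hxB ▸ hx)

lemma subset_of_product_subset_union_left {Uz Ux Uy : Finset α} {Vz Vx Vy : Finset β}
    (h : Uz ×ˢ Vz ⊆ Ux ×ˢ Vx ∪ Uy ×ˢ Vy) {i : α} (hi : i ∈ Uz) (hiy : i ∉ Uy) : Vz ⊆ Vx :=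
  fun j hj => by
    have := h (mk_mem_product hi hj)
    simp only [mem_union, mem_product] at this
    tauto

lemma subset_of_product_subset_union_right {Uz Ux Uy : Finset α} {Vz Vx Vy : Finset β}
    (h : Uz ×ˢ Vz ⊆ Ux ×ˢ Vx ∪ Uy ×ˢ Vy) {j : β} (hj : j ∈ Vz) (hjy : j ∉ Vy) : Uz ⊆ Ux :=
  fun i hi => by
    have := h (mk_mem_product hi hj)
    simp only [mem_union, mem_product] at this
    tauto

lemma eq_or_eq_of_product_subset_union {k l : ℕ} {Ux Uy Uz : Finset α} {Vx Vy Vz : Finset β}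
    (hUx : #Ux = k) (hUy : #Uy = k) (hUz : #Uz = k)
    (hVx : #Vx = l) (hVy : #Vy = l) (hVz : #Vz = l)
    (hU : Ux ≠ Uy) (hV : Vx ≠ Vy) (h : Uz ×ˢ Vz ⊆ Ux ×ˢ Vx ∪ Uy ×ˢ Vy) :
    (Uz, Vz) = (Ux, Vx) ∨ (Uz, Vz) = (Uy, Vy) := by
  obtain ⟨i, hiz, hixy⟩ : ∃ i ∈ Uz, i ∉ Ux ∩ Uy := by
    refine exists_mem_notMem_of_card_lt_card ?_
    have := card_inter_lt_of_not_subset fun hsub => hU (eq_of_subset_of_card_le hsub (by omega))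
    omega
  wlog hiy : i ∉ Uy generalizing Ux Vx Uy Vy
  · have hix : i ∉ Ux := fun hix => hixy (mem_inter.mpr ⟨hix, not_not.mp hiy⟩)
    refine (this hUy hUx hVy hVx hU.symm hV.symm ?_ ?_ hix).symm
    · rwa [union_comm]
    · rwa [inter_comm]
  have hVzx : Vz = Vx :=
    eq_of_subset_of_card_le (subset_of_product_subset_union_left h hiz hiy) (by omega)
  obtain ⟨j, hjx, hjy⟩ : ∃ j ∈ Vx, j ∉ Vy :=
    not_subset.mp fun hsub => hV (eq_of_subset_of_card_le hsub (by omega))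
  have hUzx : Uz = Ux :=
    eq_of_subset_of_card_le (subset_of_product_subset_union_right h (hVzx ▸ hjx) hjy) (by omega)
  exact Or.inl (by rw [hUzx, hVzx])

end FinsetLemmas

section Weight

variable {n : ℕ}

lemma weight_flip (c : Fin n → Fin n → ℝ) (U V : Finset (Fin n)) :
    weight (fun i j => c j i) V U = weight c U V :=
  sum_comm

lemma weight_indicator_add_indicator (X Y : Finset (Fin n × Fin n)) (U V : Finset (Fin n)) :
    weight (fun i j => (if (i, j) ∈ X then 1 else 0) + (if (i, j) ∈ Y then 1 else 0)) U V
      = #(U ×ˢ V ∩ X) + #(U ×ˢ V ∩ Y) := by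
  rw [weight, ← sum_product (f := fun p : Fin n × Fin n =>
    (if p ∈ X then (1 : ℝ) else 0) + (if p ∈ Y then 1 else 0))]
  simp only [sum_add_distrib, sum_boole, filter_mem_eq_inter]

lemma weight_insert_erase (c : Fin n → Fin n → ℝ) (U : Finset (Fin n)) {V : Finset (Fin n)}
    {a b : Fin n} (ha : a ∈ V) (hb : b ∉ V) :
    weight c U (insert b (V.erase a)) = weight c U V - weight c U {a} + weight c U {b} := by
  simp only [weight, ← sum_sub_distrib, ← sum_add_distrib, sum_singleton]
  refine sum_congr rfl fun i _ => ?_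
  rw [sum_insert fun h => hb (mem_of_mem_erase h), sum_erase_eq_sub ha]
  ring

end Weight

def BicliquesAdjacent {n : ℕ} (k : ℕ) (Ux Vx Uy Vy : Finset (Fin n)) : Prop :=
  ∃ c : Fin n → Fin n → ℝ,
    weight c Ux Vx = weight c Uy Vy ∧
    ∀ Uz Vz : Finset (Fin n), Uz.card = k → Vz.card = k →
      (Uz, Vz) ≠ (Ux, Vx) → (Uz, Vz) ≠ (Uy, Vy) →
      weight c Uz Vz < weight c Ux Vx

namespace BicliquesAdjacent

variable {n k : ℕ} {U Ux Vx Uy Vy : Finset (Fin n)}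

lemma swap (h : BicliquesAdjacent k Ux Vx Uy Vy) : BicliquesAdjacent k Vx Ux Vy Uy := by
  obtain ⟨c, hcw, hmax⟩ := h
  refine ⟨fun i j => c j i, by rwa [weight_flip c Ux Vx, weight_flip c Uy Vy],
    fun Uz Vz hUz hVz hzx hzy => ?_⟩
  rw [weight_flip c Vz Uz, weight_flip c Ux Vx]
  exact hmax Vz Uz hVz hUz (fun h => hzx (congrArg Prod.swap h)) fun h => hzy (congrArg Prod.swap h)

lemma of_sandwich (hUx : #Ux = k) (hVx : #Vx = k) (hUy : #Uy = k) (hVy : #Vy = k)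
    (h : ∀ Uz Vz : Finset (Fin n), #Uz = k → #Vz = k →
      Ux ×ˢ Vx ∩ Uy ×ˢ Vy ⊆ Uz ×ˢ Vz → Uz ×ˢ Vz ⊆ Ux ×ˢ Vx ∪ Uy ×ˢ Vy →
      (Uz, Vz) = (Ux, Vx) ∨ (Uz, Vz) = (Uy, Vy)) :
    BicliquesAdjacent k Ux Vx Uy Vy := by
  refine ⟨fun i j => (if (i, j) ∈ Ux ×ˢ Vx then 1 else 0) + (if (i, j) ∈ Uy ×ˢ Vy then 1 else 0),
    ?_, fun Uz Vz hUz hVz hzx hzy => ?_⟩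
  · simp only [weight_indicator_add_indicator, inter_self, inter_comm (Uy ×ˢ Vy), card_product,
      hUx, hVx, hUy, hVy, add_comm]
  · simp only [weight_indicator_add_indicator, inter_self]
    exact_mod_cast card_inter_add_card_inter_lt (by simp only [card_product, *]; rfl)
      fun ⟨hlow, hup⟩ => (h Uz Vz hUz hVz hlow hup).elim hzx hzy

lemma of_card_sdiff_eq_one (hU : #U = k) (hVx : #Vx = k) (hVy : #Vy = k)
    (h : #(Vx \ Vy) = 1) : BicliquesAdjacent k U Vx U Vy := by
  refine of_sandwich hU hVx hU hVy fun Uz Vz hUz hVz hlow hup => ?_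
  rw [product_inter_product, inter_self] at hlow
  rw [← product_union] at hup
  have hk : 0 < k := by
    have := card_le_card (sdiff_subset : Vx \ Vy ⊆ Vx)
    omega
  obtain ⟨i, hi⟩ : U.Nonempty := card_pos.mp (by omega)
  obtain ⟨j, hj⟩ : Vz.Nonempty := card_pos.mp (by omega)
  have hUz : Uz = U := eq_of_subset_of_card_le
    (fun i' hi' => (mem_product.mp (hup (mk_mem_product hi' hj))).1) (by omega)
  subst hUz
  have hVz := eq_or_eq_of_inter_subset_of_subset_union (hVz.trans hVx.symm) (hVz.trans hVy.symm) h
    (fun j' hj' => (mem_product.mp (hlow (mk_mem_product hi hj'))).2)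
    (fun j' hj' => (mem_product.mp (hup (mk_mem_product hi hj'))).2)
  rcases hVz with rfl | rfl <;> simp

lemma card_sdiff_eq_one (hU : #U = k) (hVx : #Vx = k) (hVy : #Vy = k) (hV : Vx ≠ Vy)
    (hadj : BicliquesAdjacent k U Vx U Vy) : #(Vx \ Vy) = 1 := by
  have hne0 : #(Vx \ Vy) ≠ 0 := fun h0 =>
    hV (eq_of_subset_of_card_le (sdiff_eq_empty_iff_subset.mp (card_eq_zero.mp h0)) (by omega))
  by_contra h1
  obtain ⟨a, ha, a', ha', haa'⟩ := one_lt_card.mp (by omega : 1 < #(Vx \ Vy))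
  obtain ⟨b, hb⟩ : (Vy \ Vx).Nonempty :=
    card_pos.mp (by rw [← card_sdiff_comm (hVx.trans hVy.symm)]; omega)
  rw [mem_sdiff] at ha ha' hb
  obtain ⟨c, hcw, hmax⟩ := hadj
  -- `a'` tells both exchanged solutions apart from `x` and `y`.
  set W₁ := insert b (Vx.erase a)
  set W₂ := insert a (Vy.erase b)
  have hab : a ≠ b := fun h => hb.2 (h ▸ ha.1)
  have hne : ∀ W W' : Finset (Fin n), ∀ v ∈ W, v ∉ W' → (U, W) ≠ (U, W') :=
    fun W W' v hv hv' h => hv' ((Prod.mk.inj h).2 ▸ hv)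
  have hW₁ : #W₁ = k := by
    rw [card_insert_of_notMem fun h => hb.2 (mem_of_mem_erase h), card_erase_add_one ha.1, hVx]
  have hW₂ : #W₂ = k := by
    rw [card_insert_of_notMem fun h => ha.2 (mem_of_mem_erase h), card_erase_add_one hb.1, hVy]
  have hlt₁ := hmax U W₁ hU hW₁ ((hne Vx W₁ a ha.1 (by simp [W₁, hab])).symm)
    (hne W₁ Vy a' (by simp [W₁, haa'.symm, ha'.1]) ha'.2)
  have hlt₂ := hmax U W₂ hU hW₂ ((hne Vx W₂ a' ha'.1 (by simp [W₂, haa'.symm, ha'.2])).symm)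
    ((hne Vy W₂ b hb.1 (by simp [W₂, hab.symm])).symm)
  rw [weight_insert_erase c U ha.1 hb.2] at hlt₁
  rw [weight_insert_erase c U hb.1 ha.2] at hlt₂
  linarith

end BicliquesAdjacent

theorem wbcbs_adjacency_general (n k : ℕ)
    (Ux Vx Uy Vy : Finset (Fin n))
    (hUx : Ux.card = k) (hVx : Vx.card = k) (hUy : Uy.card = k) (hVy : Vy.card = k)
    (hne : (Ux, Vx) ≠ (Uy, Vy)) :
    (∃ c : Fin n → Fin n → ℝ,
        weight c Ux Vx = weight c Uy Vy ∧
        ∀ Uz Vz : Finset (Fin n), Uz.card = k → Vz.card = k →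
          (Uz, Vz) ≠ (Ux, Vx) → (Uz, Vz) ≠ (Uy, Vy) →
          weight c Uz Vz < weight c Ux Vx)
    ↔ ((Ux ≠ Uy ∧ Vx ≠ Vy) ∨
        (Ux = Uy ∧ (Vx \ Vy).card = 1) ∨
        (Vx = Vy ∧ (Ux \ Uy).card = 1)) := by
  change BicliquesAdjacent k Ux Vx Uy Vy ↔ _
  constructor
  · intro hadj
    by_cases hU : Ux = Uy
    · subst hU
      exact Or.inr (Or.inl ⟨rfl,
        BicliquesAdjacent.card_sdiff_eq_one hUx hVx hVy (fun h => hne (h ▸ rfl)) hadj⟩)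
    by_cases hV : Vx = Vy
    · subst hV
      exact Or.inr (Or.inr ⟨rfl,
        BicliquesAdjacent.card_sdiff_eq_one hVx hUx hUy (fun h => hne (h ▸ rfl)) hadj.swap⟩)
    exact Or.inl ⟨hU, hV⟩
  · rintro (⟨hU, hV⟩ | ⟨rfl, h⟩ | ⟨rfl, h⟩)
    · exact .of_sandwich hUx hVx hUy hVy fun Uz Vz hUz hVz _ hup =>
        eq_or_eq_of_product_subset_union hUx hUy hUz hVx hVy hVz hU hV hup
    · exact .of_card_sdiff_eq_one hUx hVx hVy h
    · exact (BicliquesAdjacent.of_card_sdiff_eq_one hVx hUx hUy h).swap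

/-- Adjacency criterion in the 1-skeleton of the polytope `WBCBS(n,k)`:
two distinct feasible solutions `x = (Ux, Vx)` and `y = (Uy, Vy)` of the
balanced complete bipartite subgraph problem are adjacent iff the subgraphs
have no common parts, or they coincide in one part and differ in exactly
one vertex in the other part. -/
theorem wbcbs_adjacency (n k : ℕ) (hk : 1 ≤ k) (hkn : k < n)
    (Ux Vx Uy Vy : Finset (Fin n))
    (hUx : Ux.card = k) (hVx : Vx.card = k) (hUy : Uy.card = k) (hVy : Vy.card = k)
    (hne : (Ux, Vx) ≠ (Uy, Vy)) :
    (∃ c : Fin n → Fin n → ℝ,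
        weight c Ux Vx = weight c Uy Vy ∧
        ∀ Uz Vz : Finset (Fin n), Uz.card = k → Vz.card = k →
          (Uz, Vz) ≠ (Ux, Vx) → (Uz, Vz) ≠ (Uy, Vy) →
          weight c Uz Vz < weight c Ux Vx)
    ↔ ((Ux ≠ Uy ∧ Vx ≠ Vy) ∨
        (Ux = Uy ∧ (Vx \ Vy).card = 1) ∨
        (Vx = Vy ∧ (Ux \ Uy).card = 1)) :=
  wbcbs_adjacency_general n k Ux Vx Uy Vy hUx hVx hUy hVy hne
end

section
/- Let 1 ≤ k ≤ n and let x = (U_x, V_x) and y = (U_y, V_y) be feasible solutions of the balanced complete bipartite subgraph problem with U_x ≠ U_y and V_x ≠ V_y. Define c : Fin n → Fin n → ℝ by c i j = 1 if (i ∈ U_x and j ∈ V_x) or (i ∈ U_y and j ∈ V_y), and c i j = 0 otherwise. Then w_c(x) = w_c(y) = k², and w_c(z) < k² for every feasible solution z distinct from both x and y. In particular x and y are adjacent, and the separating weight vector can be chosen nonnegative with values in {0, 1}. -/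
open Finset

/-!
A biclique `(Uz, Vz)` of the same size as `x` and `y` has all its edges among those of `x` and
`y` only if it is `x` or `y`: a row `i ∈ Uz` outside `Uy` forces `Vz ⊆ Vx`, a column
`j ∈ Vz` outside `Vx` forces `Uz ⊆ Uy`, and equal cardinalities upgrade inclusions to
equalities. So `c` has a zero entry on every other biclique, which therefore weighs less
than `k²`.
-/

section Weight

variable {n : ℕ} {c : Fin n → Fin n → ℝ} {U V : Finset (Fin n)}

lemma weight_eq_card_mul_card (hc : ∀ i ∈ U, ∀ j ∈ V, c i j = 1) :
    weight c U V = #U * #V := by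
  simp [weight, sum_congr rfl fun i hi => sum_congr rfl (hc i hi)]

lemma weight_lt_card_mul_card (hc : ∀ i j, c i j ≤ 1) (hlt : ∃ i ∈ U, ∃ j ∈ V, c i j < 1) :
    weight c U V < #U * #V := by
  obtain ⟨i, hi, j, hj, hij⟩ := hlt
  calc weight c U V = ∑ p ∈ U ×ˢ V, c p.1 p.2 := (sum_product' ..).symm
    _ < ∑ _p ∈ U ×ˢ V, (1 : ℝ) := sum_lt_sum (fun p _ => hc p.1 p.2) ⟨(i, j), mk_mem_product hi hj, hij⟩
    _ = #U * #V := by simp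

end Weight

section Covering

variable {α β : Type*} {Ux Uy Uz : Finset α} {Vx Vy Vz : Finset β}

lemma subset_of_covered_of_mem_of_notMem
    (hcov : ∀ i ∈ Uz, ∀ j ∈ Vz, (i ∈ Ux ∧ j ∈ Vx) ∨ (i ∈ Uy ∧ j ∈ Vy))
    {i : α} (hiz : i ∈ Uz) (hiy : i ∉ Uy) : Vz ⊆ Vx := fun j hj =>
  (hcov i hiz j hj).elim And.right fun h => absurd h.1 hiy

lemma subset_of_covered_of_mem_of_notMem'
    (hcov : ∀ i ∈ Uz, ∀ j ∈ Vz, (i ∈ Ux ∧ j ∈ Vx) ∨ (i ∈ Uy ∧ j ∈ Vy))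
    {j : β} (hjz : j ∈ Vz) (hjx : j ∉ Vx) : Uz ⊆ Uy := fun i hi =>
  (hcov i hi j hjz).elim (fun h => absurd h.2 hjx) And.left

lemma exists_mem_notMem_of_ne_of_card_eq {s t : Finset α} (hst : s ≠ t) (hcard : #s = #t) :
    ∃ a ∈ s, a ∉ t :=
  not_subset.mp fun h => hst (eq_of_subset_of_card_le h hcard.ge)

lemma eq_or_eq_of_covered {k l : ℕ} (hUx : #Ux = k) (hUy : #Uy = k) (hUz : #Uz = k)
    (hVx : #Vx = l) (hVy : #Vy = l) (hVz : #Vz = l) (hU : Ux ≠ Uy) (hV : Vx ≠ Vy)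
    (hcov : ∀ i ∈ Uz, ∀ j ∈ Vz, (i ∈ Ux ∧ j ∈ Vx) ∨ (i ∈ Uy ∧ j ∈ Vy)) :
    (Uz, Vz) = (Ux, Vx) ∨ (Uz, Vz) = (Uy, Vy) := by
  by_cases hzx : Uz ⊆ Ux
  · have hUzx : Uz = Ux := eq_of_subset_of_card_le hzx (by omega)
    obtain ⟨i, hix, hiy⟩ := exists_mem_notMem_of_ne_of_card_eq hU (by omega)
    have hVzx : Vz = Vx := eq_of_subset_of_card_le
      (subset_of_covered_of_mem_of_notMem hcov (hUzx ▸ hix) hiy) (by omega)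
    exact .inl (by rw [hUzx, hVzx])
  · obtain ⟨i, hiz, hix⟩ := not_subset.mp hzx
    have hVzy : Vz = Vy := eq_of_subset_of_card_le
      (subset_of_covered_of_mem_of_notMem (fun i hi j hj => (hcov i hi j hj).symm) hiz hix)
      (by omega)
    obtain ⟨j, hjy, hjx⟩ := exists_mem_notMem_of_ne_of_card_eq hV.symm (by omega)
    have hUzy : Uz = Uy := eq_of_subset_of_card_le
      (subset_of_covered_of_mem_of_notMem' hcov (hVzy ▸ hjy) hjx) (by omega)
    exact .inr (by rw [hUzy, hVzy])

end Covering

theorem wbcbs_adjacent_of_no_common_parts_general (n k : ℕ)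
    (Ux Vx Uy Vy : Finset (Fin n))
    (hUx : Ux.card = k) (hVx : Vx.card = k) (hUy : Uy.card = k) (hVy : Vy.card = k)
    (hU : Ux ≠ Uy) (hV : Vx ≠ Vy)
    (c : Fin n → Fin n → ℝ)
    (hc : ∀ i j, c i j = if (i ∈ Ux ∧ j ∈ Vx) ∨ (i ∈ Uy ∧ j ∈ Vy) then 1 else 0) :
    weight c Ux Vx = (k : ℝ) ^ 2 ∧
    weight c Uy Vy = (k : ℝ) ^ 2 ∧
    (∀ Uz Vz : Finset (Fin n), Uz.card = k → Vz.card = k →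
      (Uz, Vz) ≠ (Ux, Vx) → (Uz, Vz) ≠ (Uy, Vy) →
      weight c Uz Vz < (k : ℝ) ^ 2) ∧
    (∀ i j, 0 ≤ c i j) ∧ (∀ i j, c i j = 0 ∨ c i j = 1) := by
  have hc01 : ∀ i j, c i j = 0 ∨ c i j = 1 := fun i j => by rw [hc]; split_ifs <;> simp
  have hc_le : ∀ i j, c i j ≤ 1 := fun i j => by rw [hc]; split_ifs <;> norm_num
  refine ⟨?_, ?_, fun Uz Vz hUz hVz hzx hzy => ?_,
    fun i j => by rw [hc]; split_ifs <;> norm_num, hc01⟩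
  · rw [weight_eq_card_mul_card fun i hi j hj => by simp [hc, hi, hj], hUx, hVx, sq]
  · rw [weight_eq_card_mul_card fun i hi j hj => by simp [hc, hi, hj], hUy, hVy, sq]
  · have huncovered : ∃ i ∈ Uz, ∃ j ∈ Vz, c i j < 1 := by
      by_contra! hcov
      refine (eq_or_eq_of_covered hUx hUy hUz hVx hVy hVz hU hV fun i hi j hj => ?_).elim hzx hzy
      by_contra hij
      exact absurd (hcov i hi j hj) (by simp [hc, hij])
    simpa [hUz, hVz, sq] using weight_lt_card_mul_card hc_le huncovered

/-- If two feasible solutions `x = (Ux, Vx)`, `y = (Uy, Vy)` of the balanced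
complete bipartite subgraph problem have no common parts (`Ux ≠ Uy` and
`Vx ≠ Vy`), then the nonnegative 0/1 weight function `c` with `c i j = 1`
exactly on the edges of `x` and `y` gives both of them weight `k²` and gives
every other feasible solution strictly smaller weight; in particular `x` and
`y` are adjacent, via a nonnegative weight vector with values in `{0, 1}`. -/
theorem wbcbs_adjacent_of_no_common_parts (n k : ℕ) (hk : 1 ≤ k) (hkn : k ≤ n)
    (Ux Vx Uy Vy : Finset (Fin n))
    (hUx : Ux.card = k) (hVx : Vx.card = k) (hUy : Uy.card = k) (hVy : Vy.card = k)
    (hU : Ux ≠ Uy) (hV : Vx ≠ Vy)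
    (c : Fin n → Fin n → ℝ)
    (hc : ∀ i j, c i j = if (i ∈ Ux ∧ j ∈ Vx) ∨ (i ∈ Uy ∧ j ∈ Vy) then 1 else 0) :
    weight c Ux Vx = (k : ℝ) ^ 2 ∧
    weight c Uy Vy = (k : ℝ) ^ 2 ∧
    (∀ Uz Vz : Finset (Fin n), Uz.card = k → Vz.card = k →
      (Uz, Vz) ≠ (Ux, Vx) → (Uz, Vz) ≠ (Uy, Vy) →
      weight c Uz Vz < (k : ℝ) ^ 2) ∧
    (∀ i j, 0 ≤ c i j) ∧ (∀ i j, c i j = 0 ∨ c i j = 1) :=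
  wbcbs_adjacent_of_no_common_parts_general n k Ux Vx Uy Vy hUx hVx hUy hVy hU hV c hc
end

section
/- Let 1 ≤ k ≤ n and let x = (U_x, V_x) and y = (U_y, V_y) be distinct feasible solutions of the balanced complete bipartite subgraph problem with V_x = V_y and |U_x \ U_y| = 1. Define c : Fin n → Fin n → ℝ by c i j = 1 if i ∈ U_x ∩ U_y and j ∈ V_x; c i j = 0 if i ∈ U_x △ U_y (symmetric difference) and j ∈ V_x; and c i j = −1 otherwise. Then w_c(x) = w_c(y) = k(k−1), and w_c(z) < k(k−1) for every feasible solution z distinct from both x and y; in particular x and y are adjacent. -/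
/-!
Put `A = Ux ∩ Uy` and `B = Ux ∪ Uy`, so `|A| = k - 1` and `|B| = k + 1`. The weight function is
`c i j = ([i ∈ A] + [i ∈ B]) [j ∈ Vx] - 1`, hence a feasible `(U, V)` has weight
`(|U ∩ A| + |U ∩ B|) |V ∩ Vx| - k²  ≤  (2k - 1) k - k² = k (k - 1)`.
Equality forces `V = Vx` and `A ⊆ U ⊆ B`; since `B \ A` has only two elements, `U` is `Ux` or `Uy`.
-/

open Finset

namespace Finset

variable {α : Type*} [DecidableEq α] {s t u : Finset α}

theorem subset_of_card_le_card_inter (h : #s ≤ #(s ∩ t)) : s ⊆ t :=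
  inter_eq_left.mp (eq_of_subset_of_card_le inter_subset_left h)

theorem eq_or_eq_of_inter_subset_of_subset_union (hst : #s = #t) (hs : #(s \ t) = 1)
    (hu : #u = #s) (hsu : s ∩ t ⊆ u) (hus : u ⊆ s ∪ t) : u = s ∨ u = t := by
  by_cases hsub : u ⊆ s
  · exact .inl (eq_of_subset_of_card_le hsub hu.ge)
  obtain ⟨x, hxu, hxs⟩ := not_subset.mp hsub
  have hxt : x ∈ t := (mem_union.mp (hus hxu)).resolve_left hxs
  have hcard : #(insert x (s ∩ t)) = #t := by
    rw [card_insert_of_notMem fun h => hxs (mem_inter.mp h).1]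
    have := card_sdiff_add_card_inter s t
    omega
  have hx_t : insert x (s ∩ t) = t :=
    eq_of_subset_of_card_le (insert_subset hxt inter_subset_right) hcard.ge
  have hx_u : insert x (s ∩ t) = u :=
    eq_of_subset_of_card_le (insert_subset hxu hsu) (by omega)
  exact .inr (hx_u.symm.trans hx_t)

end Finset

theorem weight_eq_of_eq_ite {n : ℕ} {c : Fin n → Fin n → ℝ} {A B V₀ : Finset (Fin n)}
    (hAB : A ⊆ B)
    (hc : ∀ i j, c i j =
      if i ∈ A ∧ j ∈ V₀ then 1 else if i ∈ B ∧ j ∈ V₀ then 0 else -1)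
    (U V : Finset (Fin n)) :
    weight c U V = (#(U ∩ A) + #(U ∩ B)) * #(V ∩ V₀) - #U * #V := by
  have hc' : ∀ i j, c i j =
      ((if i ∈ A then 1 else 0) + (if i ∈ B then 1 else 0)) * (if j ∈ V₀ then 1 else 0) - 1 := by
    intro i j
    have hi := @hAB i
    rw [hc]
    split_ifs <;> simp_all
  simp only [weight, hc', sum_sub_distrib, ← sum_mul_sum, sum_add_distrib, sum_boole,
    filter_mem_eq_inter, sum_const, nsmul_eq_mul, mul_one]

theorem add_mul_sub_lt_of_lt {a b v k : ℕ} (hk : 1 ≤ k) (ha : a + 1 ≤ k) (hb : b ≤ k) (hv : v ≤ k)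
    (h : a + 1 < k ∨ b < k ∨ v < k) :
    ((a : ℝ) + b) * v - k * k < k * (k - 1) := by
  have : (a + b) * v + k < 2 * (k * k) := by
    rcases h with h | h | h <;> nlinarith
  have : ((a + b) * v + k : ℝ) < 2 * (k * k) := by exact_mod_cast this
  linarith

theorem wbcbs_adjacent_of_common_part_general (n k : ℕ) (hk : 1 ≤ k)
    (Ux Vx Uy Vy : Finset (Fin n))
    (hUx : Ux.card = k) (hVx : Vx.card = k) (hUy : Uy.card = k)
    (hV : Vx = Vy) (hU1 : (Ux \ Uy).card = 1)
    (c : Fin n → Fin n → ℝ)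
    (hc : ∀ i j, c i j =
      if i ∈ Ux ∩ Uy ∧ j ∈ Vx then 1
      else if i ∈ (Ux \ Uy) ∪ (Uy \ Ux) ∧ j ∈ Vx then 0
      else -1) :
    weight c Ux Vx = (k : ℝ) * ((k : ℝ) - 1) ∧
    weight c Uy Vy = (k : ℝ) * ((k : ℝ) - 1) ∧
    ∀ Uz Vz : Finset (Fin n), Uz.card = k → Vz.card = k →
      (Uz, Vz) ≠ (Ux, Vx) → (Uz, Vz) ≠ (Uy, Vy) →
      weight c Uz Vz < (k : ℝ) * ((k : ℝ) - 1) := by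
  subst hV
  have hw := weight_eq_of_eq_ite (c := c) (B := Ux ∪ Uy) (V₀ := Vx) inter_subset_union
    fun i j => by rw [hc]; simp only [mem_inter, mem_union, mem_sdiff]; split_ifs <;> tauto
  have hA : #(Ux ∩ Uy) + 1 = k := by have := card_sdiff_add_card_inter Ux Uy; omega
  have hAr : (#(Ux ∩ Uy) : ℝ) = k - 1 := by rw [← hA]; push_cast; ring
  refine ⟨?_, ?_, fun Uz Vz hUz hVz hzx hzy => ?_⟩
  · rw [hw, inter_eq_right.mpr inter_subset_left, inter_eq_left.mpr subset_union_left,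
      inter_self, hAr, hUx, hVx]; ring
  · rw [hw, inter_eq_right.mpr inter_subset_right, inter_eq_left.mpr subset_union_right,
      inter_self, hAr, hUy, hVx]; ring
  rw [hw, hUz, hVz]
  refine add_mul_sub_lt_of_lt hk ?_ ?_ ?_ ?_
  · have := card_le_card (inter_subset_right (s₁ := Uz) (s₂ := Ux ∩ Uy)); omega
  · exact hUz ▸ card_le_card inter_subset_left
  · exact hVz ▸ card_le_card inter_subset_left
  by_contra! ⟨ha, hb, hv⟩
  have hVzx : Vz = Vx := eq_of_subset_of_card_le
    (subset_of_card_le_card_inter (by omega)) (by omega)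
  have hAUz : Ux ∩ Uy ⊆ Uz :=
    subset_of_card_le_card_inter (by rw [inter_comm (Ux ∩ Uy) Uz]; omega)
  have hUzB : Uz ⊆ Ux ∪ Uy := subset_of_card_le_card_inter (by omega)
  rcases eq_or_eq_of_inter_subset_of_subset_union (hUx.trans hUy.symm) hU1
    (hUz.trans hUx.symm) hAUz hUzB with rfl | rfl
  · exact hzx (by rw [hVzx])
  · exact hzy (by rw [hVzx])

/-- If two distinct feasible solutions `x = (Ux, Vx)`, `y = (Uy, Vy)` of the
balanced complete bipartite subgraph problem coincide in the right part
(`Vx = Vy`) and differ in exactly one vertex in the left part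
(`|Ux \ Uy| = 1`), then the weight function `c` equal to `1` on
`(Ux ∩ Uy) × Vx`, `0` on `(Ux △ Uy) × Vx`, and `−1` elsewhere gives both `x`
and `y` weight `k(k−1)` and every other feasible solution strictly smaller
weight; in particular `x` and `y` are adjacent. -/
theorem wbcbs_adjacent_of_common_part (n k : ℕ) (hk : 1 ≤ k) (hkn : k ≤ n)
    (Ux Vx Uy Vy : Finset (Fin n))
    (hUx : Ux.card = k) (hVx : Vx.card = k) (hUy : Uy.card = k) (hVy : Vy.card = k)
    (hne : (Ux, Vx) ≠ (Uy, Vy))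
    (hV : Vx = Vy) (hU1 : (Ux \ Uy).card = 1)
    (c : Fin n → Fin n → ℝ)
    (hc : ∀ i j, c i j =
      if i ∈ Ux ∩ Uy ∧ j ∈ Vx then 1
      else if i ∈ (Ux \ Uy) ∪ (Uy \ Ux) ∧ j ∈ Vx then 0
      else -1) :
    weight c Ux Vx = (k : ℝ) * ((k : ℝ) - 1) ∧
    weight c Uy Vy = (k : ℝ) * ((k : ℝ) - 1) ∧
    ∀ Uz Vz : Finset (Fin n), Uz.card = k → Vz.card = k →
      (Uz, Vz) ≠ (Ux, Vx) → (Uz, Vz) ≠ (Uy, Vy) →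
      weight c Uz Vz < (k : ℝ) * ((k : ℝ) - 1) :=
  wbcbs_adjacent_of_common_part_general n k hk Ux Vx Uy Vy hUx hVx hUy hV hU1 c hc
end

section
/- Let 1 ≤ k ≤ n and let x = (U_x, V_x) and y = (U_y, V_y) be feasible solutions of the balanced complete bipartite subgraph problem with V_x = V_y and |U_x \ U_y| ≥ 2. Then for every weight function c : Fin n → Fin n → ℝ there exists a feasible solution z distinct from both x and y with w_c(z) ≥ min(w_c(x), w_c(y)). Consequently, x and y are not adjacent: there is no c with w_c(x) = w_c(y) and w_c(z) < w_c(x) for all feasible z ∉ {x, y}. -/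
/-!
With the right part `V` fixed, `w_c(U, V)` is the sum over `U` of the row weights
`r i = ∑ j ∈ V, c i j`. Swap a lightest row `a` of `U_x \ U_y` for a heaviest row `b` of
`U_y \ U_x`. If `r b ≥ r a` this does not decrease `w_c(x)`; otherwise every row of
`U_y \ U_x` is lighter than every row of `U_x \ U_y`, and the swap still leaves at least
as much as `w_c(y)`. Since `|U_x \ U_y| ≥ 2`, the result differs from `y` as well as from `x`.
-/

open Finset

section Swap

variable {α : Type*} (f : α → ℝ)

theorem min_sum_le_sum_sub_add {S T : Finset α} (hcard : #S = #T) {a b : α} (haS : a ∈ S)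
    (ha : ∀ i ∈ S, f a ≤ f i) (hb : ∀ i ∈ T, f i ≤ f b) :
    min (∑ i ∈ S, f i) (∑ i ∈ T, f i) ≤ ∑ i ∈ S, f i - f a + f b := by
  rcases le_total (f a) (f b) with hab | hba
  · exact (min_le_left _ _).trans (by linarith)
  · refine (min_le_right _ _).trans ?_
    have hS : (#S : ℝ) * f a ≤ ∑ i ∈ S, f i := by
      simpa only [nsmul_eq_mul] using card_nsmul_le_sum S f (f a) ha
    have hT : ∑ i ∈ T, f i ≤ (#S : ℝ) * f b := by
      simpa only [nsmul_eq_mul, hcard] using sum_le_card_nsmul T f (f b) hb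
    have hpos : (1 : ℝ) ≤ #S := by exact_mod_cast card_pos.mpr ⟨a, haS⟩
    nlinarith [mul_nonneg (sub_nonneg.mpr hpos) (sub_nonneg.mpr hba)]

variable [DecidableEq α]

theorem sum_insert_erase_eq {U : Finset α} {a b : α} (ha : a ∈ U) (hb : b ∉ U) :
    ∑ i ∈ insert b (U.erase a), f i = ∑ i ∈ U, f i - f a + f b := by
  rw [sum_insert fun h => hb (mem_of_mem_erase h), sum_erase_eq_sub ha]
  ring

theorem exists_card_eq_ne_ne_min_sum_le {U W : Finset α} (hcard : #U = #W)
    (h2 : 2 ≤ #(U \ W)) :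
    ∃ U' : Finset α, #U' = #U ∧ U' ≠ U ∧ U' ≠ W ∧
      min (∑ i ∈ U, f i) (∑ i ∈ W, f i) ≤ ∑ i ∈ U', f i := by
  have hcard' : #(U \ W) = #(W \ U) := card_sdiff_comm hcard
  obtain ⟨a, ha, hamin⟩ := (U \ W).exists_min_image f (card_pos.mp (by omega))
  obtain ⟨b, hb, hbmax⟩ := (W \ U).exists_max_image f (card_pos.mp (by omega))
  obtain ⟨a', ha'⟩ : ((U \ W).erase a).Nonempty :=
    card_pos.mp (by rw [card_erase_of_mem ha]; omega)
  have hmin := min_sum_le_sum_sub_add f hcard' ha hamin hbmax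
  rw [mem_sdiff] at ha hb
  rw [mem_erase, mem_sdiff] at ha'
  refine ⟨insert b (U.erase a), ?_, ?_, ?_, ?_⟩
  · rw [card_insert_of_notMem fun h => hb.2 (mem_of_mem_erase h), card_erase_add_one ha.1]
  · exact fun h => hb.2 (h ▸ mem_insert_self b _)
  · exact fun h => ha'.2.2 (h ▸ mem_insert_of_mem (mem_erase.mpr ⟨ha'.1, ha'.2.1⟩))
  · rw [sum_insert_erase_eq f ha.1 hb.2, ← sum_inter_add_sum_sdiff U W,
      ← sum_inter_add_sum_sdiff W U, inter_comm W U, min_add_add_left]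
    linarith

end Swap

theorem wbcbs_not_adjacent_general (n k : ℕ)
    (Ux Vx Uy Vy : Finset (Fin n))
    (hUx : Ux.card = k) (hVx : Vx.card = k) (hUy : Uy.card = k)
    (hV : Vx = Vy) (hU2 : 2 ≤ (Ux \ Uy).card) :
    (∀ c : Fin n → Fin n → ℝ,
      ∃ Uz Vz : Finset (Fin n), Uz.card = k ∧ Vz.card = k ∧
        (Uz, Vz) ≠ (Ux, Vx) ∧ (Uz, Vz) ≠ (Uy, Vy) ∧
        min (weight c Ux Vx) (weight c Uy Vy) ≤ weight c Uz Vz) ∧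
    ¬ ∃ c : Fin n → Fin n → ℝ,
        weight c Ux Vx = weight c Uy Vy ∧
        ∀ Uz Vz : Finset (Fin n), Uz.card = k → Vz.card = k →
          (Uz, Vz) ≠ (Ux, Vx) → (Uz, Vz) ≠ (Uy, Vy) →
          weight c Uz Vz < weight c Ux Vx := by
  subst hV
  have key : ∀ c : Fin n → Fin n → ℝ,
      ∃ Uz Vz : Finset (Fin n), Uz.card = k ∧ Vz.card = k ∧
        (Uz, Vz) ≠ (Ux, Vx) ∧ (Uz, Vz) ≠ (Uy, Vx) ∧
        min (weight c Ux Vx) (weight c Uy Vx) ≤ weight c Uz Vz := by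
    intro c
    obtain ⟨Uz, hcard, hne_x, hne_y, hle⟩ := exists_card_eq_ne_ne_min_sum_le
      (fun i => ∑ j ∈ Vx, c i j) (hUx.trans hUy.symm) hU2
    exact ⟨Uz, Vx, hcard.trans hUx, hVx, fun h => hne_x (congrArg Prod.fst h),
      fun h => hne_y (congrArg Prod.fst h), hle⟩
  refine ⟨key, fun ⟨c, heq, hlt⟩ => ?_⟩
  obtain ⟨Uz, Vz, hUz, hVz, hne_x, hne_y, hle⟩ := key c
  rw [← heq, min_self] at hle
  exact (hlt Uz Vz hUz hVz hne_x hne_y).not_ge hle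

/-- If two feasible solutions `x = (Ux, Vx)`, `y = (Uy, Vy)` of the balanced
complete bipartite subgraph problem coincide in the right part (`Vx = Vy`)
but differ in at least two vertices in the left part (`|Ux \ Uy| ≥ 2`), then
for every weight function `c` some other feasible solution has weight at
least `min (w_c x) (w_c y)`; consequently `x` and `y` are not adjacent. -/
theorem wbcbs_not_adjacent (n k : ℕ) (hk : 1 ≤ k) (hkn : k ≤ n)
    (Ux Vx Uy Vy : Finset (Fin n))
    (hUx : Ux.card = k) (hVx : Vx.card = k) (hUy : Uy.card = k) (hVy : Vy.card = k)
    (hV : Vx = Vy) (hU2 : 2 ≤ (Ux \ Uy).card) :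
    (∀ c : Fin n → Fin n → ℝ,
      ∃ Uz Vz : Finset (Fin n), Uz.card = k ∧ Vz.card = k ∧
        (Uz, Vz) ≠ (Ux, Vx) ∧ (Uz, Vz) ≠ (Uy, Vy) ∧
        min (weight c Ux Vx) (weight c Uy Vy) ≤ weight c Uz Vz) ∧
    ¬ ∃ c : Fin n → Fin n → ℝ,
        weight c Ux Vx = weight c Uy Vy ∧
        ∀ Uz Vz : Finset (Fin n), Uz.card = k → Vz.card = k →
          (Uz, Vz) ≠ (Ux, Vx) → (Uz, Vz) ≠ (Uy, Vy) →
          weight c Uz Vz < weight c Ux Vx :=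
  wbcbs_not_adjacent_general n k Ux Vx Uy Vy hUx hVx hUy hV hU2
end

section
/- Let 1 ≤ k ≤ n. The diagonal family Y_{n,k} = { (A, A) : A ⊆ Fin n, |A| = k } consists of C(n, k) feasible solutions of the balanced complete bipartite subgraph problem, and any two distinct members of Y_{n,k} are adjacent. Consequently, the clique number of the 1-skeleton of the polytope WBCBS(n,k) is at least the binomial coefficient C(n, k): there exists a family of C(n, k) pairwise adjacent feasible solutions. -/
/-!
For `A ≠ B` of size `k`, take the cost `M·[i = j] + 1_A(i)1_A(j) + 1_B(i)1_B(j)` with `M > 2k²`.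
A feasible `(U, V)` has weight `M·|U ∩ V| + |U ∩ A||V ∩ A| + |U ∩ B||V ∩ B|`, so the large
matching term makes every diagonal solution beat every off-diagonal one. On the diagonal the weight
is `Mk + a² + b²` with `a = |U ∩ A|`, `b = |U ∩ B|`; here `a, b < k` unless `U ∈ {A, B}`, and
`a + b ≤ k + |A ∩ B|`, so convexity of `x ↦ x²` gives `a² + b² < k² + |A ∩ B|²`, the common
weight of `(A, A)` and `(B, B)` beyond `Mk`.
-/

open Finset

/-- The diagonal family `Y_{n,k} = {(A, A) : A ⊆ Fin n, |A| = k}`. -/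
def diagFamily (n k : ℕ) : Finset (Finset (Fin n) × Finset (Fin n)) :=
  (Finset.powersetCard k (Finset.univ : Finset (Fin n))).image (fun A => (A, A))

lemma mul_self_add_mul_self_lt {R : Type*} [CommRing R] [LinearOrder R] [IsStrictOrderedRing R]
    {a b k t : R} (ha₀ : 0 ≤ a) (hb₀ : 0 ≤ b) (ha : a < k) (hb : b < k) (hab : a + b ≤ k + t) :
    a * a + b * b < k * k + t * t := by
  rcases le_or_gt b t with hbt | htb
  · nlinarith [mul_le_mul hbt hbt hb₀ (hb₀.trans hbt)]
  · -- `a² ≤ (k + t - b)²` and `(k + t - b)² + b² = k² + t² + 2 (k - b) (t - b)`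
    nlinarith [mul_le_mul (le_sub_iff_add_le.2 hab) (le_sub_iff_add_le.2 hab) ha₀
      (ha₀.trans (le_sub_iff_add_le.2 hab)), mul_pos (sub_pos.2 hb) (sub_pos.2 htb)]

section Cardinality

variable {α : Type*} [DecidableEq α]

lemma Finset.card_inter_lt_of_card_eq_of_ne {U A : Finset α} {k : ℕ} (hU : #U = k)
    (hA : #A = k) (hne : U ≠ A) : #(U ∩ A) < k := by
  refine (card_le_card inter_subset_left).trans_eq hU |>.lt_of_ne fun h => hne ?_
  have hUA : U ∩ A = U := eq_of_subset_of_card_le inter_subset_left (by omega)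
  exact eq_of_subset_of_card_le (hUA ▸ inter_subset_right) (by omega)

lemma Finset.card_inter_add_card_inter_le (U A B : Finset α) :
    #(U ∩ A) + #(U ∩ B) ≤ #U + #(A ∩ B) := by
  rw [← card_union_add_card_inter, ← inter_union_distrib_left, ← inter_inter_distrib_left]
  exact add_le_add (card_le_card inter_subset_left) (card_le_card inter_subset_right)

end Cardinality

section Weight

variable {n : ℕ}

lemma weight_add (c d : Fin n → Fin n → ℝ) (U V : Finset (Fin n)) :
    weight (c + d) U V = weight c U V + weight d U V := by
  simp only [weight, Pi.add_apply, sum_add_distrib]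

lemma weight_smul (M : ℝ) (c : Fin n → Fin n → ℝ) (U V : Finset (Fin n)) :
    weight (M • c) U V = M * weight c U V := by
  simp only [weight, Pi.smul_apply, smul_eq_mul, mul_sum]

def diagCost (n : ℕ) : Fin n → Fin n → ℝ := fun i j => if i = j then 1 else 0

def bicliqueCost (A : Finset (Fin n)) : Fin n → Fin n → ℝ :=
  fun i j => (if i ∈ A then 1 else 0) * (if j ∈ A then 1 else 0)

lemma weight_diagCost (U V : Finset (Fin n)) : weight (diagCost n) U V = #(U ∩ V) := by
  simp [weight, diagCost, sum_ite_eq]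

lemma weight_bicliqueCost (A U V : Finset (Fin n)) :
    weight (bicliqueCost A) U V = #(U ∩ A) * #(V ∩ A) := by
  simp [weight, bicliqueCost, inter_comm]

def separatingCost (M : ℝ) (A B : Finset (Fin n)) : Fin n → Fin n → ℝ :=
  M • diagCost n + bicliqueCost A + bicliqueCost B

lemma weight_separatingCost (M : ℝ) (A B U V : Finset (Fin n)) :
    weight (separatingCost M A B) U V =
      M * #(U ∩ V) + #(U ∩ A) * #(V ∩ A) + #(U ∩ B) * #(V ∩ B) := by
  rw [separatingCost, weight_add, weight_add, weight_smul, weight_diagCost, weight_bicliqueCost,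
    weight_bicliqueCost]

variable {M : ℝ} {k : ℕ} {A B U V : Finset (Fin n)}

lemma weight_separatingCost_self_eq (hA : #A = k) (hB : #B = k) :
    weight (separatingCost M A B) A A = weight (separatingCost M A B) B B := by
  simp only [weight_separatingCost, inter_self, hA, hB, inter_comm B A]
  ring

lemma weight_separatingCost_diag_lt (hA : #A = k) (hB : #B = k) (hU : #U = k) (hUA : U ≠ A)
    (hUB : U ≠ B) : weight (separatingCost M A B) U U < weight (separatingCost M A B) A A := by
  have key : ((#(U ∩ A) : ℕ) : ℝ) * #(U ∩ A) + (#(U ∩ B) : ℝ) * #(U ∩ B)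
      < (k : ℝ) * k + (#(A ∩ B) : ℝ) * #(A ∩ B) :=
    mul_self_add_mul_self_lt (Nat.cast_nonneg _) (Nat.cast_nonneg _)
      (by exact_mod_cast card_inter_lt_of_card_eq_of_ne hU hA hUA)
      (by exact_mod_cast card_inter_lt_of_card_eq_of_ne hU hB hUB)
      (by exact_mod_cast hU ▸ card_inter_add_card_inter_le U A B)
  simp only [weight_separatingCost, inter_self, hU, hA]
  linarith

lemma weight_separatingCost_offDiag_lt (hA : #A = k) (hM : 2 * k * k < M) (hU : #U = k)
    (hV : #V = k) (hUV : U ≠ V) :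
    weight (separatingCost M A B) U V < weight (separatingCost M A B) A A := by
  have hUV' : (#(U ∩ V) : ℝ) ≤ k - 1 := by
    rw [le_sub_iff_add_le]
    exact_mod_cast card_inter_lt_of_card_eq_of_ne hU hV hUV
  have bound : ∀ X Y : Finset (Fin n), #X = k → (#(X ∩ Y) : ℝ) ≤ k := fun X Y hX => by
    exact_mod_cast hX ▸ card_le_card inter_subset_left
  have hA' := mul_le_mul (bound U A hU) (bound V A hV) (Nat.cast_nonneg _) (Nat.cast_nonneg _)
  have hB' := mul_le_mul (bound U B hU) (bound V B hV) (Nat.cast_nonneg _) (Nat.cast_nonneg _)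
  have hM' := mul_le_mul_of_nonneg_left hUV' ((by positivity : (0 : ℝ) ≤ 2 * k * k).trans hM.le)
  simp only [weight_separatingCost, inter_self, hA]
  nlinarith [mul_self_nonneg (#(A ∩ B) : ℝ)]

end Weight

lemma mem_diagFamily {n k : ℕ} {x : Finset (Fin n) × Finset (Fin n)} :
    x ∈ diagFamily n k ↔ ∃ A : Finset (Fin n), #A = k ∧ (A, A) = x := by
  simp [diagFamily]

lemma card_diagFamily (n k : ℕ) : #(diagFamily n k) = n.choose k := by
  rw [diagFamily, card_image_of_injective _ fun A B h => congrArg Prod.fst h, card_powersetCard,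
    card_univ, Fintype.card_fin]

theorem wbcbs_clique_number_general (n k : ℕ) :
    (diagFamily n k).card = n.choose k ∧
    (∀ x ∈ diagFamily n k, x.1.card = k ∧ x.2.card = k) ∧
    (∀ x ∈ diagFamily n k, ∀ y ∈ diagFamily n k, x ≠ y →
      ∃ c : Fin n → Fin n → ℝ,
        weight c x.1 x.2 = weight c y.1 y.2 ∧
        ∀ z : Finset (Fin n) × Finset (Fin n), z.1.card = k → z.2.card = k →
          z ≠ x → z ≠ y → weight c z.1 z.2 < weight c x.1 x.2) := by
  refine ⟨card_diagFamily n k, fun x hx => ?_, fun x hx y hy hxy => ?_⟩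
  · obtain ⟨A, hA, rfl⟩ := mem_diagFamily.1 hx
    exact ⟨hA, hA⟩
  obtain ⟨A, hA, rfl⟩ := mem_diagFamily.1 hx
  obtain ⟨B, hB, rfl⟩ := mem_diagFamily.1 hy
  refine ⟨separatingCost (2 * k * k + 1) A B, weight_separatingCost_self_eq hA hB, ?_⟩
  rintro ⟨U, V⟩ hU hV hzA hzB
  obtain rfl | hUV := eq_or_ne U V
  · exact weight_separatingCost_diag_lt hA hB hU (by rintro rfl; exact hzA rfl)
      (by rintro rfl; exact hzB rfl)
  · exact weight_separatingCost_offDiag_lt hA (lt_add_one _) hU hV hUV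

/-- The diagonal family `Y_{n,k}` consists of `C(n,k)` feasible solutions of
the balanced complete bipartite subgraph problem that are pairwise adjacent;
hence the clique number of the 1-skeleton of `WBCBS(n,k)` is at least
`C(n,k)`. -/
theorem wbcbs_clique_number (n k : ℕ) (hk : 1 ≤ k) (hkn : k ≤ n) :
    (diagFamily n k).card = n.choose k ∧
    (∀ x ∈ diagFamily n k, x.1.card = k ∧ x.2.card = k) ∧
    (∀ x ∈ diagFamily n k, ∀ y ∈ diagFamily n k, x ≠ y →
      ∃ c : Fin n → Fin n → ℝ,
        weight c x.1 x.2 = weight c y.1 y.2 ∧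
        ∀ z : Finset (Fin n) × Finset (Fin n), z.1.card = k → z.2.card = k →
          z ≠ x → z ≠ y → weight c z.1 z.2 < weight c x.1 x.2) :=
  wbcbs_clique_number_general n k
end

section
/- Let n = 2m be even, let k = 3s be a multiple of 3 with (9/4)·m < k < 3m (equivalently 3m < 4s and s < m). Then there exists a family of C(m, s) feasible solutions of the unbalanced problem on k vertices that are pairwise adjacent in the nonnegative cone decomposition for the minimum problem: for any two distinct members x, y of the family there is a nonnegative weight function c : Fin n → Fin n → ℝ with w_c(x) = w_c(y) and w_c(z) > w_c(x) for every feasible solution z distinct from x and y. Hence the clique number of the graph of the cone decomposition K^min_{n,k} is at least C(m, s). (Concretely, partition each side of K_{n,n} into two halves of size m, each half indexed by Fin m; for every S ⊆ Fin m with |S| = s take the solution whose left part is the copy of S in the first left half and whose right part is the union of the copies of S in both right halves.) -/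
/-!
For two bicliques `x = (Ux, Vx)`, `y = (Uy, Vy)` with `|Ux| = |Uy| = s`, `|Vx| = |Vy| = 2s`,
`|Ux ∩ Uy| = t < s` and `|Vx ∩ Vy| = 2t`, charge `t (2s - 2t) + 1` on every edge lying in neither
biclique and cost `1` on the edges from `Ux ∩ Uy` to `Vx ∆ Vy`. Both `x` and `y` then weigh
`t (2s - 2t)`. A competitor `z = (U, V)` avoiding the expensive edges has `U × V` inside
`Ux × Vx ∪ Uy × Vy`, which forces `z ∈ {x, y}`, or `|U| + |V| < 3s`, or `U ⊆ Ux ∩ Uy`; in the last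
case `|U| = a ≤ t` and `w(z) ≥ a (3s - a - 2t)`, and
`2 (a (3s - a - 2t) - t (2s - 2t)) = (3a - s)(s - a) + (2t - a - s)²`
is positive because `|V| ≤ n` gives `3a ≥ 9s - 3n > s` as soon as `3n < 8s`.
For `n = 2m` and `3m < 4s`, the `C(m, s)` bicliques built from the `s`-subsets of `Fin m` are
pairwise in this position, with `t = |S ∩ T|`.
-/

open Finset

namespace Finset

theorem subset_cases_of_product_subset_union_product {α β : Type*} [DecidableEq α] [DecidableEq β]
    {U A C : Finset α} {V B D : Finset β} (hU : U.Nonempty) (hV : V.Nonempty)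
    (h : U ×ˢ V ⊆ A ×ˢ B ∪ C ×ˢ D) :
    (U ⊆ A ∧ V ⊆ B) ∨ (U ⊆ C ∧ V ⊆ D) ∨ (U ⊆ A ∩ C ∧ V ⊆ B ∪ D) ∨
      (U ⊆ A ∪ C ∧ V ⊆ B ∩ D) := by
  have mem : ∀ i ∈ U, ∀ j ∈ V, (i ∈ A ∧ j ∈ B) ∨ (i ∈ C ∧ j ∈ D) := fun i hi j hj => by
    simpa using h (mk_mem_product hi hj)
  obtain ⟨i₀, hi₀⟩ := hU
  obtain ⟨j₀, hj₀⟩ := hV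
  by_cases hA : U ⊆ A <;> by_cases hC : U ⊆ C
  · refine .inr <| .inr <| .inl ⟨subset_inter hA hC, fun j hj => ?_⟩
    rcases mem i₀ hi₀ j hj with h | h <;> simp [h]
  · obtain ⟨i, hi, hiC⟩ := not_subset.mp hC
    exact .inl ⟨hA, fun j hj => by grind⟩
  · obtain ⟨i, hi, hiA⟩ := not_subset.mp hA
    exact .inr <| .inl ⟨hC, fun j hj => by grind⟩
  · obtain ⟨i, hi, hiC⟩ := not_subset.mp hC
    obtain ⟨i', hi', hiA⟩ := not_subset.mp hA
    refine .inr <| .inr <| .inr ⟨fun i hi => ?_, fun j hj => ?_⟩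
    · rcases mem i hi j₀ hj₀ with h | h <;> simp [h]
    · grind

theorem prod_mk_eq_of_subset_of_card_add_le {α β : Type*} {U U' : Finset α} {V V' : Finset β}
    (hU : U ⊆ U') (hV : V ⊆ V') (h : #U' + #V' ≤ #U + #V) : (U, V) = (U', V') := by
  have := card_le_card hU
  have := card_le_card hV
  rw [eq_of_subset_of_card_le hU (by omega), eq_of_subset_of_card_le hV (by omega)]

theorem card_inter_lt_of_card_eq {α : Type*} [DecidableEq α] {S T : Finset α}
    (h : #S = #T) (hST : S ≠ T) : #(S ∩ T) < #S :=
  card_lt_card <| inter_subset_left.ssubset_of_ne fun hS =>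
    hST (eq_of_subset_of_card_le (inter_eq_left.mp hS) h.ge)

end Finset

theorem mul_lt_mul_of_lt_three_mul {a q s t d : ℕ} (hat : a ≤ t) (hts : t < s)
    (hd : d + 2 * t = 2 * s) (hq : 3 * s ≤ q + a + 2 * t) (ha : s < 3 * a) : t * d < a * q := by
  zify at *
  have hq' : (a : ℤ) * (3 * s - a - 2 * t) ≤ a * q := by gcongr; linarith
  nlinarith [mul_pos (by linarith : (0 : ℤ) < 3 * a - s) (by linarith : (0 : ℤ) < s - a),
    sq_nonneg ((2 : ℤ) * t - a - s)]

open scoped symmDiff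

section Cost

variable {n : ℕ}

def edgeCost (M : ℝ) (E D : Finset (Fin n × Fin n)) (i j : Fin n) : ℝ :=
  (if (i, j) ∈ E then 0 else M) + if (i, j) ∈ D then 1 else 0

theorem edgeCost_nonneg {M : ℝ} (hM : 0 ≤ M) (E D : Finset (Fin n × Fin n)) (i j : Fin n) :
    0 ≤ edgeCost M E D i j := by
  unfold edgeCost
  split_ifs <;> positivity

theorem weight_edgeCost (M : ℝ) (E D : Finset (Fin n × Fin n)) (U V : Finset (Fin n)) :
    weight (edgeCost M E D) U V = M * #(U ×ˢ V \ E) + #(U ×ˢ V ∩ D) := by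
  rw [weight, ← sum_product' (f := fun i j => edgeCost M E D i j)]
  simp only [edgeCost, Prod.mk.eta, sum_add_distrib, sum_boole, sum_ite, sum_const_zero,
    zero_add, sum_const, nsmul_eq_mul, filter_not, filter_mem_eq_inter, sdiff_inter_self_left]
  ring

def MinConeAdjacent (k : ℕ) (x y : Finset (Fin n) × Finset (Fin n)) : Prop :=
  ∃ c : Fin n → Fin n → ℝ, (∀ i j, 0 ≤ c i j) ∧ weight c x.1 x.2 = weight c y.1 y.2 ∧
    ∀ z : Finset (Fin n) × Finset (Fin n), #z.1 + #z.2 = k → z ≠ x → z ≠ y →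
      weight c x.1 x.2 < weight c z.1 z.2

theorem minConeAdjacent_of_card_inter {s : ℕ} (hns : 3 * n < 8 * s)
    {Ux Vx Uy Vy : Finset (Fin n)} (hUx : #Ux = s) (hUy : #Uy = s) (hVx : #Vx = 2 * s)
    (hVy : #Vy = 2 * s) (hU : #(Ux ∩ Uy) < s) (hV : #(Vx ∩ Vy) = 2 * #(Ux ∩ Uy)) :
    MinConeAdjacent (3 * s) (Ux, Vx) (Uy, Vy) := by
  set t := #(Ux ∩ Uy)
  set d := #(Vx \ Vy)
  have hdx : d + 2 * t = 2 * s := hV ▸ hVx ▸ card_sdiff_add_card_inter Vx Vy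
  have hdy : #(Vy \ Vx) = d := by
    have := card_sdiff_add_card_inter Vy Vx
    rw [inter_comm, hV, hVy] at this
    omega
  have hD (U V : Finset (Fin n)) : U ×ˢ V ∩ (Ux ∩ Uy) ×ˢ (Vx ∆ Vy) =
      (U ∩ (Ux ∩ Uy)) ×ˢ (V ∩ Vx ∆ Vy) := product_inter_product
  set c := edgeCost (t * d + 1) (Ux ×ˢ Vx ∪ Uy ×ˢ Vy) ((Ux ∩ Uy) ×ˢ (Vx ∆ Vy))
  have hx : weight c Ux Vx = t * d := by
    have hVx' : Vx ∩ Vx ∆ Vy = Vx \ Vy := by ext; simp [mem_symmDiff]; tauto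
    rw [weight_edgeCost, sdiff_eq_empty_iff_subset.mpr subset_union_left, hD, inter_left_idem,
      hVx', card_product, card_empty]
    simp [t, d]
  have hy : weight c Uy Vy = t * d := by
    have hVy' : Vy ∩ Vx ∆ Vy = Vy \ Vx := by ext; simp [mem_symmDiff]; tauto
    rw [weight_edgeCost, sdiff_eq_empty_iff_subset.mpr subset_union_right, hD,
      inter_eq_right.mpr inter_subset_right, hVy', card_product, hdy, card_empty]
    simp [t, mul_comm]
  refine ⟨c, fun i j => edgeCost_nonneg (by positivity) _ _ i j, hx.trans hy.symm, ?_⟩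
  rintro ⟨U, V⟩ hk hzx hzy
  dsimp only at hk ⊢
  rw [hx]
  have hUn : #U ≤ n := card_le_univ U |>.trans_eq (Fintype.card_fin n)
  have hVn : #V ≤ n := card_le_univ V |>.trans_eq (Fintype.card_fin n)
  by_cases hE : U ×ˢ V ⊆ Ux ×ˢ Vx ∪ Uy ×ˢ Vy
  · rcases subset_cases_of_product_subset_union_product (card_pos.mp (by omega))
      (card_pos.mp (by omega)) hE with ⟨hU', hV'⟩ | ⟨hU', hV'⟩ | ⟨hU', hV'⟩ | ⟨hU', hV'⟩
    · exact absurd (prod_mk_eq_of_subset_of_card_add_le hU' hV' (by omega)) hzx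
    · exact absurd (prod_mk_eq_of_subset_of_card_add_le hU' hV' (by omega)) hzy
    · have hVcover : V ⊆ V ∩ Vx ∆ Vy ∪ Vx ∩ Vy := fun j hj => by
        have := hV' hj
        simp [mem_symmDiff] at this ⊢
        tauto
      have hVcard := (card_le_card hVcover).trans (card_union_le (V ∩ Vx ∆ Vy) (Vx ∩ Vy))
      have hlt := mul_lt_mul_of_lt_three_mul (q := #(V ∩ Vx ∆ Vy)) (card_le_card hU') hU hdx
        (by omega) (by omega)
      rw [weight_edgeCost, sdiff_eq_empty_iff_subset.mpr hE, hD, inter_eq_left.mpr hU',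
        card_product]
      simpa using (Nat.cast_lt (α := ℝ)).mpr hlt
    · have := card_le_card hU'
      have := card_le_card hV'
      have := card_union_add_card_inter Ux Uy
      omega
  · have hM : (1 : ℝ) ≤ #(U ×ˢ V \ (Ux ×ˢ Vx ∪ Uy ×ˢ Vy)) :=
      mod_cast card_pos.mpr (sdiff_nonempty.mpr hE)
    rw [weight_edgeCost]
    have : (0 : ℝ) ≤ #(U ×ˢ V ∩ (Ux ∩ Uy) ×ˢ (Vx ∆ Vy)) := by positivity
    have : (0 : ℝ) ≤ t * d := by positivity
    nlinarith

end Cost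

theorem minwcbs_clique_number_general (m s : ℕ) (hms : 3 * m < 4 * s) :
    ∃ Y : Finset (Finset (Fin (2 * m)) × Finset (Fin (2 * m))),
      Y.card = m.choose s ∧
      (∀ x ∈ Y, x.1.card + x.2.card = 3 * s) ∧
      ∀ x ∈ Y, ∀ y ∈ Y, x ≠ y →
        ∃ c : Fin (2 * m) → Fin (2 * m) → ℝ,
          (∀ i j, 0 ≤ c i j) ∧
          weight c x.1 x.2 = weight c y.1 y.2 ∧
          ∀ z : Finset (Fin (2 * m)) × Finset (Fin (2 * m)),
            z.1.card + z.2.card = 3 * s → z ≠ x → z ≠ y →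
            weight c x.1 x.2 < weight c z.1 z.2 := by
  -- each side `Fin (2 * m)` is read as two halves `Fin 2 × Fin m`
  let e : Fin 2 × Fin m ↪ Fin (2 * m) := finProdFinEquiv.toEmbedding
  let F (S : Finset (Fin m)) : Finset (Fin (2 * m)) × Finset (Fin (2 * m)) :=
    (({0} ×ˢ S).map e, (univ ×ˢ S).map e)
  have hF : F.Injective := fun S T h => by simpa [F] using congrArg Prod.fst h
  refine ⟨(powersetCard s univ).image F, ?_, ?_, ?_⟩
  · rw [card_image_of_injective _ hF, card_powersetCard, card_univ, Fintype.card_fin]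
  · simp only [mem_image, mem_powersetCard_univ]
    rintro _ ⟨S, hS, rfl⟩
    simp [F, hS]
    ring
  · simp only [mem_image, mem_powersetCard_univ]
    rintro _ ⟨S, hS, rfl⟩ _ ⟨T, hT, rfl⟩ hST
    have hinter : #(S ∩ T) < s :=
      hS ▸ card_inter_lt_of_card_eq (hS.trans hT.symm) fun h => hST (congrArg F h)
    refine minConeAdjacent_of_card_inter (by omega) ?_ ?_ ?_ ?_ ?_ ?_ <;>
      simp [← map_inter, product_inter_product, hS, hT, hinter]

/-- For `n = 2m` and `k = 3s` with `(9/4)·m < k < 3m` (i.e. `3m < 4s` and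
`s < m`), there is a family of `C(m, s)` feasible solutions of the
unbalanced problem on `k` vertices that are pairwise adjacent in the
nonnegative cone decomposition `K^min_{n,k}` for the minimum problem: for
any two distinct members `x`, `y` there is a nonnegative weight function
`c` giving `x` and `y` equal weight and every other feasible solution a
strictly larger weight. Hence the clique number of the graph of
`K^min_{n,k}` is at least `C(m, s)`. -/
theorem minwcbs_clique_number (m s : ℕ) (hms : 3 * m < 4 * s) (hsm : s < m) :
    ∃ Y : Finset (Finset (Fin (2 * m)) × Finset (Fin (2 * m))),
      Y.card = m.choose s ∧
      (∀ x ∈ Y, x.1.card + x.2.card = 3 * s) ∧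
      ∀ x ∈ Y, ∀ y ∈ Y, x ≠ y →
        ∃ c : Fin (2 * m) → Fin (2 * m) → ℝ,
          (∀ i j, 0 ≤ c i j) ∧
          weight c x.1 x.2 = weight c y.1 y.2 ∧
          ∀ z : Finset (Fin (2 * m)) × Finset (Fin (2 * m)),
            z.1.card + z.2.card = 3 * s → z ≠ x → z ≠ y →
            weight c x.1 x.2 < weight c z.1 z.2 :=
  minwcbs_clique_number_general m s hms
end

section
/- There are no positive integers m, s, a, b satisfying simultaneously: b·(3s − b − 2a) ≤ 2a·(s − a), 3m < 4s, s < m, 2s − m ≤ a, a < s, 3s − 2m ≤ b, and b ≤ a. Equivalently, for all positive integers m, s, a, b (viewed in ℤ) with 3m < 4s, s < m, 2s − m ≤ a < s, and 3s − 2m ≤ b ≤ a, one has b·(3s − b − 2a) > 2a·(s − a). -/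
/-!
The right-hand side `b(3s − b − 2a)` is a concave quadratic in `b`, so on the interval
`3s − 2m ≤ b ≤ a` it exceeds `2a(s − a)` as soon as it does at both endpoints. At `b = a` the
excess is `a(s − a) > 0`; at `b = 3s − 2m` it is `2((2s − m − a)² + (m − s)(4s − 3m))`, positive
because `s < m` and `3m < 4s`.
-/

section

variable {R : Type*} [CommRing R] [LinearOrder R] [IsStrictOrderedRing R]

/-- By the interpolation identity
`(r - l) (x (p - x) - d) = (r - x) (l (p - l) - d) + (x - l) (r (p - r) - d) + (r - l) (x - l) (r - x)`. -/
theorem lt_mul_sub_of_lt_at_endpoints {p d l r x : R}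
    (hl : d < l * (p - l)) (hr : d < r * (p - r)) (hlx : l ≤ x) (hxr : x ≤ r) :
    d < x * (p - x) := by
  rcases hlx.eq_or_lt with rfl | hlx'
  · exact hl
  have hlr : 0 < r - l := by linarith
  have hinterp : 0 < (r - x) * (l * (p - l) - d) + (x - l) * (r * (p - r) - d) := by
    nlinarith [mul_nonneg (sub_nonneg.2 hxr) (sub_pos.2 hl).le]
  have hsum : 0 < (r - l) * (x * (p - x) - d) := by
    nlinarith [mul_nonneg (mul_nonneg hlr.le (sub_nonneg.2 hlx)) (sub_nonneg.2 hxr)]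
  nlinarith [(pos_iff_pos_of_mul_pos hsum).1 hlr]

theorem two_mul_mul_sub_lt_at_lower_endpoint {m s a : R} (hsm : s < m) (hm : 3 * m < 4 * s) :
    2 * a * (s - a) < (3 * s - 2 * m) * ((3 * s - 2 * a) - (3 * s - 2 * m)) := by
  have hexcess : (3 * s - 2 * m) * ((3 * s - 2 * a) - (3 * s - 2 * m)) - 2 * a * (s - a)
      = 2 * ((2 * s - m - a) ^ 2 + (m - s) * (4 * s - 3 * m)) := by ring
  have hprod : 0 < (m - s) * (4 * s - 3 * m) := mul_pos (by linarith) (by linarith)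
  nlinarith [sq_nonneg (2 * s - m - a)]

theorem two_mul_mul_sub_lt_at_upper_endpoint {s a : R} (ha : 0 < a) (has : a < s) :
    2 * a * (s - a) < a * ((3 * s - 2 * a) - a) := by
  nlinarith [mul_pos ha (sub_pos.2 has)]

end

/-- There are no positive integers `m, s, a, b` with
`b(3s − b − 2a) ≤ 2a(s − a)`, `3m < 4s`, `s < m`, `2s − m ≤ a < s`, and
`3s − 2m ≤ b ≤ a`: under these side conditions one always has
`2a(s − a) < b(3s − b − 2a)` (all arithmetic in `ℤ`). -/
theorem minwcbs_system_no_solution :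
    ∀ m s a b : ℤ, 0 < m → 0 < s → 0 < a → 0 < b →
      3 * m < 4 * s → s < m →
      2 * s - m ≤ a → a < s →
      3 * s - 2 * m ≤ b → b ≤ a →
      2 * a * (s - a) < b * (3 * s - b - 2 * a) := by
  intro m s a b _ _ ha _ hm hsm _ has hlb hba
  have h := lt_mul_sub_of_lt_at_endpoints (two_mul_mul_sub_lt_at_lower_endpoint (a := a) hsm hm)
    (two_mul_mul_sub_lt_at_upper_endpoint ha has) hlb hba
  linarith [show b * (3 * s - 2 * a - b) = b * (3 * s - b - 2 * a) by ring]
end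

section
/- Let n ≥ 1 and let k be a positive integer with k < 2n. Let E ⊆ (Fin n) × (Fin n) and define c : Fin n → Fin n → ℝ by c i j = n² if (i, j) ∈ E and c i j = 1 otherwise. Then for all A, B, A', B' ⊆ Fin n with |A| + |B| = k and |A'| + |B'| = k: if the number of E-edges inside A × B is strictly less than the number of E-edges inside A' × B' (i.e. |E ∩ (A × B)| < |E ∩ (A' × B')|), then ∑_{i ∈ A} ∑_{j ∈ B} c i j < ∑_{i ∈ A'} ∑_{j ∈ B'} c i j. In other words, the total contribution of all edges of weight 1 inside a feasible subgraph is less than the contribution of a single edge of weight n², so minimizing the weight of a complete bipartite subgraph on k vertices is equivalent to minimizing the number of E-edges it contains. -/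
open Finset

/-!
Edges of `E` weigh `w = n²` and all other pairs weigh `1`. A pair `(A, B)` with `|A| + |B| < 2n`
spans `|A||B| < n²` pairs by AM-GM, so all its weight-1 pairs together weigh less than one edge;
hence one more `E`-edge always outweighs them.
-/

theorem Nat.mul_lt_sq_of_add_lt_two_mul {a b n : ℕ} (h : a + b < 2 * n) : a * b < n ^ 2 := by
  nlinarith [sq_nonneg ((a : ℤ) - b)]

section EdgeWeights

variable {α β : Type*} [DecidableEq α] [DecidableEq β] (E : Finset (α × β)) (w : ℝ)

theorem sum_sum_ite_mem_eq (A : Finset α) (B : Finset β) :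
    ∑ i ∈ A, ∑ j ∈ B, (if (i, j) ∈ E then w else 1) = w * #(E ∩ A ×ˢ B) + #(A ×ˢ B \ E) := by
  rw [← sum_product' (f := fun i j => if (i, j) ∈ E then w else 1), sum_ite, sum_const, sum_const,
    nsmul_eq_mul, nsmul_one, mul_comm, filter_mem_eq_inter, inter_comm, sdiff_eq_filter]

variable {E w}

theorem sum_sum_ite_mem_lt_of_card_inter_lt {A A' : Finset α} {B B' : Finset β}
    (hw : (#A * #B : ℝ) < w) (hE : #(E ∩ A ×ˢ B) < #(E ∩ A' ×ˢ B')) :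
    ∑ i ∈ A, ∑ j ∈ B, (if (i, j) ∈ E then w else 1)
      < ∑ i ∈ A', ∑ j ∈ B', (if (i, j) ∈ E then w else 1) := by
  rw [sum_sum_ite_mem_eq, sum_sum_ite_mem_eq]
  have hw₀ : 0 ≤ w := hw.le.trans' (by positivity)
  have hnonedges : (#(A ×ˢ B \ E) : ℝ) ≤ #A * #B := by
    exact_mod_cast (card_le_card sdiff_subset).trans (card_product A B).le
  have hedges : (#(E ∩ A ×ˢ B) + 1 : ℝ) ≤ #(E ∩ A' ×ˢ B') := by exact_mod_cast hE
  calc w * #(E ∩ A ×ˢ B) + #(A ×ˢ B \ E)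
      < w * #(E ∩ A ×ˢ B) + w := by linarith
    _ = w * (#(E ∩ A ×ˢ B) + 1) := by ring
    _ ≤ w * #(E ∩ A' ×ˢ B') := mul_le_mul_of_nonneg_left hedges hw₀
    _ ≤ w * #(E ∩ A' ×ˢ B') + #(A' ×ˢ B' \ E) := le_add_of_nonneg_right (by positivity)

end EdgeWeights

theorem minwcbs_edge_count_dominates_general (n k : ℕ)
    (hkn : k < 2 * n)
    (E : Finset (Fin n × Fin n)) (c : Fin n → Fin n → ℝ)
    (hc : ∀ i j, c i j = if (i, j) ∈ E then (n : ℝ) ^ 2 else 1) :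
    ∀ A B A' B' : Finset (Fin n),
      A.card + B.card = k → A'.card + B'.card = k →
      (E ∩ A ×ˢ B).card < (E ∩ A' ×ˢ B').card →
      ∑ i ∈ A, ∑ j ∈ B, c i j < ∑ i ∈ A', ∑ j ∈ B', c i j := by
  intro A B A' B' hAB _ hE
  simp only [hc]
  refine sum_sum_ite_mem_lt_of_card_inter_lt ?_ hE
  exact_mod_cast Nat.mul_lt_sq_of_add_lt_two_mul (hAB ▸ hkn)

/-- For the minimum problem on `k < 2n` vertices with edge weights `n²` on
the edges of `E` and `1` elsewhere, the weight of a feasible pair `(A, B)`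
is strictly smaller than the weight of a feasible pair `(A', B')` whenever
`(A, B)` contains strictly fewer `E`-edges than `(A', B')`: the total
contribution of all weight-1 edges is less than the contribution of a
single edge of weight `n²`, so minimizing the weight is equivalent to
minimizing the number of `E`-edges. -/
theorem minwcbs_edge_count_dominates (n k : ℕ) (hn : 1 ≤ n) (hk : 1 ≤ k)
    (hkn : k < 2 * n)
    (E : Finset (Fin n × Fin n)) (c : Fin n → Fin n → ℝ)
    (hc : ∀ i j, c i j = if (i, j) ∈ E then (n : ℝ) ^ 2 else 1) :
    ∀ A B A' B' : Finset (Fin n),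
      A.card + B.card = k → A'.card + B'.card = k →
      (E ∩ A ×ˢ B).card < (E ∩ A' ×ˢ B').card →
      ∑ i ∈ A, ∑ j ∈ B, c i j < ∑ i ∈ A', ∑ j ∈ B', c i j :=
  minwcbs_edge_count_dominates_general n k hkn E c hc
end
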